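/- arXiv:2306.04278 — 2 statements merged into one kernel-verified Lean document; each statement's English description precedes it below -/
import Mathlib

section
/- Let p ∈ (0,1). The pushforward of the product measure (Lebesgue measure on [0,1]) ⊗ Bernoulli(p) ⊗ β(p,1−p) under the map (v, b, x) ↦ v·b + (1−v)·x equals β(p,1−p). In other words, if V is uniform on [0,1], B is Bernoulli(p), and X has law β(p,1−p), all independent, then V·B + (1−V)·X also has law β(p,1−p). -/
open MeasureTheory

/-- The beta distribution `β(a,b)` on `[0,1]`, with density
`x ↦ x^{a−1}(1−x)^{b−1}/(Γ(a)Γ(b))` with respect to Lebesgue measure. -/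
noncomputable def betaMeasure (a b : ℝ) : Measure ℝ :=
  (volume.restrict (Set.Icc (0:ℝ) 1)).withDensity
    (fun x => ENNReal.ofReal (x ^ (a - 1) * (1 - x) ^ (b - 1) / (Real.Gamma a * Real.Gamma b)))

/-- The Bernoulli distribution of parameter `p` on `{0,1} ⊆ ℝ`. -/
noncomputable def bernoulliMeasure (p : ℝ) : Measure ℝ :=
  (ENNReal.ofReal p) • Measure.dirac (1:ℝ) + (ENNReal.ofReal (1 - p)) • Measure.dirac (0:ℝ)

/-!
Compare distribution functions. Given `X = t ∈ (0,1)`, the set of `v ∈ [0,1]` with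
`v b + (1 - v) t ≤ x` is an interval of length `min ((x - t) / (1 - t)) 1` if `b = 1` and
`min (x / t) 1` if `b = 0` (clamped at `0` by `ENNReal.ofReal`). Write `w t = t^(p-1) (1-t)^(-p)` for the unnormalised density
(the normalising constant plays no role, by linearity). For `0 < x < 1` the claim
`P(V B + (1 - V) X ≤ x) = ∫₀ˣ w` reduces to
`(1 - p) x ∫ₓ¹ w t / t dt = p (1 - x) ∫₀ˣ w t / (1 - t) dt`,
and both sides equal `x^p (1-x)^(1-p)`, since `p w t / (1 - t)` and `(1 - p) w t / t` are the
derivatives of `t^p (1-t)^(-p)` and `-t^(p-1) (1-t)^(1-p)`.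
-/

open Set ENNReal

noncomputable def unnormalizedBetaDensity (p t : ℝ) : ℝ := t ^ (p - 1) * (1 - t) ^ (-p)

@[fun_prop]
lemma measurable_unnormalizedBetaDensity (p : ℝ) : Measurable (unnormalizedBetaDensity p) := by
  unfold unnormalizedBetaDensity
  fun_prop

lemma unnormalizedBetaDensity_nonneg (p : ℝ) {t : ℝ} (ht0 : 0 ≤ t) (ht1 : t ≤ 1) :
    0 ≤ unnormalizedBetaDensity p t :=
  mul_nonneg (Real.rpow_nonneg ht0 _) (Real.rpow_nonneg (sub_nonneg.2 ht1) _)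

lemma betaMeasure_eq_smul_withDensity (p : ℝ) :
    betaMeasure p (1 - p) = ENNReal.ofReal (Real.Gamma p * Real.Gamma (1 - p))⁻¹ •
      (volume.restrict (Ioo 0 1)).withDensity
        (fun t => ENNReal.ofReal (unnormalizedBetaDensity p t)) := by
  rw [betaMeasure, ← Measure.restrict_congr_set Ioo_ae_eq_Icc, ← withDensity_smul _ (by fun_prop)]
  refine withDensity_congr_ae (ae_restrict_of_forall_mem measurableSet_Ioo fun t ht => ?_)
  dsimp only
  rw [Pi.smul_apply, smul_eq_mul, div_eq_mul_inv, mul_comm (ENNReal.ofReal _),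
    sub_sub_cancel_left, ← unnormalizedBetaDensity,
    ENNReal.ofReal_mul (unnormalizedBetaDensity_nonneg p ht.1.le ht.2.le)]

lemma betaMeasure_eq_probabilityTheory_betaMeasure {a b : ℝ} (hab : a + b = 1) :
    betaMeasure a b = ProbabilityTheory.betaMeasure a b := by
  rw [betaMeasure, ProbabilityTheory.betaMeasure, ← Measure.restrict_congr_set Ioo_ae_eq_Icc,
    ← withDensity_indicator measurableSet_Ioo]
  congr 1
  ext t
  by_cases ht : t ∈ Ioo 0 1
  · rw [indicator_of_mem ht, ProbabilityTheory.betaPDF_of_pos_lt_one ht.1 ht.2,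
      ProbabilityTheory.beta, hab, Real.Gamma_one]
    ring_nf
  · rw [indicator_of_notMem ht, ProbabilityTheory.betaPDF_eq, if_neg (c := 0 < t ∧ t < 1) ht,
      ENNReal.ofReal_zero]

instance (p : ℝ) : SFinite (bernoulliMeasure p) := by
  rw [bernoulliMeasure]
  infer_instance

lemma prod_bernoulliMeasure_prod_apply (p : ℝ) (ρ ν : Measure ℝ) [SFinite ρ] [SFinite ν]
    {s : Set (ℝ × ℝ × ℝ)} (hs : MeasurableSet s) :
    ρ.prod ((bernoulliMeasure p).prod ν) s =
      ENNReal.ofReal p * ∫⁻ t, ρ ((fun v => (v, 1, t)) ⁻¹' s) ∂ν +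
        ENNReal.ofReal (1 - p) * ∫⁻ t, ρ ((fun v => (v, 0, t)) ⁻¹' s) ∂ν := by
  rw [Measure.prod_apply_symm hs,
    lintegral_prod _ (measurable_measure_prodMk_right hs).aemeasurable, bernoulliMeasure,
    lintegral_add_measure, lintegral_smul_measure, lintegral_smul_measure,
    lintegral_dirac, lintegral_dirac, smul_eq_mul, smul_eq_mul]

lemma restrict_Icc_zero_one_Iic (a : ℝ) :
    volume.restrict (Icc (0:ℝ) 1) (Iic a) = ENNReal.ofReal (min a 1) := by
  have : Iic a ∩ Icc 0 1 = Icc 0 (min a 1) := by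
    ext v; simp only [mem_inter_iff, mem_Iic, mem_Icc, le_min_iff]; tauto
  rw [Measure.restrict_apply measurableSet_Iic, this, Real.volume_Icc, sub_zero]

lemma restrict_Icc_zero_one_Ici (a : ℝ) :
    volume.restrict (Icc (0:ℝ) 1) (Ici a) = ENNReal.ofReal (min (1 - a) 1) := by
  have : Ici a ∩ Icc 0 1 = Icc (max a 0) 1 := by
    ext v; simp only [mem_inter_iff, mem_Ici, mem_Icc, max_le_iff]; tauto
  rw [Measure.restrict_apply measurableSet_Ici, this, Real.volume_Icc, ← min_sub_sub_left,
    sub_zero]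

lemma restrict_Icc_zero_one_preimage_Iic_add {t : ℝ} (ht : t < 1) (x : ℝ) :
    volume.restrict (Icc (0:ℝ) 1) ((fun v => v + (1 - v) * t) ⁻¹' Iic x) =
      ENNReal.ofReal (min ((x - t) / (1 - t)) 1) := by
  have h1t : 0 < 1 - t := by linarith
  have : (fun v => v + (1 - v) * t) ⁻¹' Iic x = Iic ((x - t) / (1 - t)) := by
    ext v
    simp only [mem_preimage, mem_Iic, le_div_iff₀ h1t]
    constructor <;> intro h <;> linarith
  rw [this, restrict_Icc_zero_one_Iic]

lemma restrict_Icc_zero_one_preimage_Iic_mul {t : ℝ} (ht : 0 < t) (x : ℝ) :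
    volume.restrict (Icc (0:ℝ) 1) ((fun v => (1 - v) * t) ⁻¹' Iic x) =
      ENNReal.ofReal (min (x / t) 1) := by
  have : (fun v => (1 - v) * t) ⁻¹' Iic x = Ici (1 - x / t) := by
    ext v
    simp only [mem_preimage, mem_Iic, mem_Ici]
    rw [sub_le_comm, le_div_iff₀ ht]
  rw [this, restrict_Icc_zero_one_Ici, _root_.sub_sub_cancel]

lemma lintegral_Ioo_ofReal_deriv_eq_sub {f f' : ℝ → ℝ} {a b : ℝ} (hab : a ≤ b)
    (hcont : ContinuousOn f (Icc a b)) (hderiv : ∀ x ∈ Ioo a b, HasDerivAt f (f' x) x)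
    (hpos : ∀ x ∈ Ioo a b, 0 ≤ f' x) :
    ∫⁻ x in Ioo a b, ENNReal.ofReal (f' x) = ENNReal.ofReal (f b - f a) := by
  have hint : IntegrableOn f' (Ioc a b) :=
    intervalIntegral.integrableOn_deriv_of_nonneg hcont hderiv hpos
  rw [← ofReal_integral_eq_lintegral_ofReal (hint.mono_set Ioo_subset_Ioc_self)
      (ae_restrict_of_forall_mem measurableSet_Ioo hpos),
    ← integral_Ioc_eq_integral_Ioo, ← intervalIntegral.integral_of_le hab,
    intervalIntegral.integral_eq_sub_of_hasDerivAt_of_le hab hcont hderiv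
      ((intervalIntegrable_iff_integrableOn_Ioc_of_le hab).2 hint)]

lemma hasDerivAt_rpow_mul_one_sub_rpow (a b : ℝ) {t : ℝ} (ht0 : 0 < t) (ht1 : t < 1) :
    HasDerivAt (fun t : ℝ => t ^ a * (1 - t) ^ b)
      ((a * (1 - t) - b * t) * (t ^ (a - 1) * (1 - t) ^ (b - 1))) t := by
  have h1t : (1 - t) ≠ 0 := by linarith
  refine ((Real.hasDerivAt_rpow_const (p := a) (Or.inl ht0.ne')).mul
    ((Real.hasDerivAt_rpow_const (p := b) (Or.inl h1t)).comp t
      ((hasDerivAt_id t).const_sub 1))).congr_deriv ?_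
  simp only [Function.comp_apply, Real.rpow_sub_one ht0.ne', Real.rpow_sub_one h1t]
  field_simp
  ring

lemma lintegral_Ioo_zero_unnormalizedBetaDensity_div_one_sub {p x : ℝ} (hp : 0 < p)
    (hx0 : 0 ≤ x) (hx1 : x < 1) :
    ∫⁻ t in Ioo 0 x, ENNReal.ofReal (p * unnormalizedBetaDensity p t / (1 - t)) =
      ENNReal.ofReal (x ^ p * (1 - x) ^ (-p)) := by
  have hcont : ContinuousOn (fun t : ℝ => t ^ p * (1 - t) ^ (-p)) (Icc 0 x) := by
    refine ContinuousOn.mul (fun t _ => ?_) (fun t ht => ?_)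
    · exact (Real.continuousAt_rpow_const t p (Or.inr hp.le)).continuousWithinAt
    · exact ((Real.continuousAt_rpow_const (1 - t) (-p) (Or.inl (by linarith [ht.2]))).comp
        (by fun_prop)).continuousWithinAt
  rw [lintegral_Ioo_ofReal_deriv_eq_sub hx0 hcont (fun t ht => ?_) (fun t ht => ?_)]
  · simp [Real.zero_rpow hp.ne']
  · have h1t : 1 - t ≠ 0 := by linarith [ht.2]
    refine (hasDerivAt_rpow_mul_one_sub_rpow p (-p) ht.1 (by linarith [ht.2])).congr_deriv ?_
    rw [unnormalizedBetaDensity, Real.rpow_sub_one h1t]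
    ring
  · have := unnormalizedBetaDensity_nonneg p ht.1.le (by linarith [ht.2])
    have : 0 < 1 - t := by linarith [ht.2]
    positivity

lemma lintegral_Ioo_one_unnormalizedBetaDensity_div {p x : ℝ} (hp : p < 1) (hx0 : 0 < x)
    (hx1 : x ≤ 1) :
    ∫⁻ t in Ioo x 1, ENNReal.ofReal ((1 - p) * unnormalizedBetaDensity p t / t) =
      ENNReal.ofReal (x ^ (p - 1) * (1 - x) ^ (1 - p)) := by
  have hcont : ContinuousOn (fun t : ℝ => -(t ^ (p - 1) * (1 - t) ^ (1 - p))) (Icc x 1) := by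
    refine (ContinuousOn.mul (fun t ht => ?_) (fun t _ => ?_)).neg
    · exact (Real.continuousAt_rpow_const t (p - 1)
        (Or.inl (by linarith [ht.1]))).continuousWithinAt
    · exact ((Real.continuousAt_rpow_const (1 - t) (1 - p) (Or.inr (by linarith))).comp
        (by fun_prop)).continuousWithinAt
  rw [lintegral_Ioo_ofReal_deriv_eq_sub hx1 hcont (fun t ht => ?_) (fun t ht => ?_)]
  · simp [Real.zero_rpow (sub_pos.2 hp).ne']
  · have ht0 : t ≠ 0 := by linarith [ht.1]
    refine (hasDerivAt_rpow_mul_one_sub_rpow (p - 1) (1 - p) (hx0.trans ht.1)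
      ht.2).neg.congr_deriv ?_
    rw [unnormalizedBetaDensity, Real.rpow_sub_one ht0, sub_sub_cancel_left]
    ring
  · have := unnormalizedBetaDensity_nonneg p (hx0.trans ht.1).le ht.2.le
    have : 0 < t := hx0.trans ht.1
    have : 0 < 1 - p := by linarith
    positivity

lemma ofReal_one_sub_mul_lintegral_Ioo_unnormalizedBetaDensity {p x : ℝ} (hp0 : 0 < p)
    (hp1 : p < 1) (hx0 : 0 < x) (hx1 : x < 1) :
    ENNReal.ofReal (1 - p) *
        ∫⁻ t in Ioo x 1, ENNReal.ofReal (unnormalizedBetaDensity p t * (x / t)) =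
      ∫⁻ t in Ioc 0 x, ENNReal.ofReal (1 - x) *
        ENNReal.ofReal (p * unnormalizedBetaDensity p t / (1 - t)) := by
  rw [lintegral_const_mul' _ _ ofReal_ne_top, ← Measure.restrict_congr_set Ioo_ae_eq_Ioc,
    lintegral_Ioo_zero_unnormalizedBetaDensity_div_one_sub hp0 hx0.le hx1,
    ← lintegral_const_mul' _ _ ofReal_ne_top,
    setLIntegral_congr_fun measurableSet_Ioo (g := fun t => ENNReal.ofReal x *
      ENNReal.ofReal ((1 - p) * unnormalizedBetaDensity p t / t)) fun t ht => ?_,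
    lintegral_const_mul' _ _ ofReal_ne_top,
    lintegral_Ioo_one_unnormalizedBetaDensity_div hp1 hx0 hx1.le,
    ← ENNReal.ofReal_mul hx0.le, ← ENNReal.ofReal_mul (by linarith)]
  · congr 1
    rw [Real.rpow_sub_one hx0.ne', show 1 - p = -p + 1 by ring, Real.rpow_add_one (by linarith)]
    field_simp
  · dsimp only
    rw [← ENNReal.ofReal_mul (by linarith), ← ENNReal.ofReal_mul hx0.le]
    congr 1
    field_simp

lemma lintegral_mixture_cdf_split {p x : ℝ} (hp0 : 0 < p) (hp1 : p < 1)
    (hx0 : 0 < x) (hx1 : x < 1) :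
    ENNReal.ofReal p *
        (∫⁻ t in Ioc 0 x, ENNReal.ofReal (unnormalizedBetaDensity p t * ((x - t) / (1 - t)))) +
      ENNReal.ofReal (1 - p) * ((∫⁻ t in Ioc 0 x, ENNReal.ofReal (unnormalizedBetaDensity p t)) +
        ∫⁻ t in Ioo x 1, ENNReal.ofReal (unnormalizedBetaDensity p t * (x / t))) =
    ∫⁻ t in Ioc 0 x, ENNReal.ofReal (unnormalizedBetaDensity p t) := by
  have hsum : ENNReal.ofReal p *
        (∫⁻ t in Ioc 0 x, ENNReal.ofReal (unnormalizedBetaDensity p t * ((x - t) / (1 - t)))) +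
      ∫⁻ t in Ioc 0 x, ENNReal.ofReal (1 - x) *
        ENNReal.ofReal (p * unnormalizedBetaDensity p t / (1 - t)) =
      ENNReal.ofReal p * ∫⁻ t in Ioc 0 x, ENNReal.ofReal (unnormalizedBetaDensity p t) := by
    rw [← lintegral_const_mul' _ _ ofReal_ne_top, ← lintegral_add_left (by fun_prop),
      ← lintegral_const_mul' _ _ ofReal_ne_top]
    refine setLIntegral_congr_fun measurableSet_Ioc fun t ht => ?_
    have h1t : 0 < 1 - t := by linarith [ht.2]
    have hxt : 0 ≤ x - t := by linarith [ht.2]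
    have h1x : 0 ≤ 1 - x := by linarith
    have hw := unnormalizedBetaDensity_nonneg p ht.1.le (by linarith [ht.2])
    rw [← ENNReal.ofReal_mul hp0.le, ← ENNReal.ofReal_mul h1x,
      ← ENNReal.ofReal_add (by positivity) (by positivity), ← ENNReal.ofReal_mul hp0.le]
    congr 1
    field_simp
    ring
  rw [mul_add, ofReal_one_sub_mul_lintegral_Ioo_unnormalizedBetaDensity hp0 hp1 hx0 hx1,
    ← add_assoc, add_right_comm, hsum, ← add_mul,
    ← ENNReal.ofReal_add hp0.le (by linarith), add_sub_cancel, ENNReal.ofReal_one, one_mul]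

lemma lintegral_mixture_cdf_of_pos_of_lt_one {p x : ℝ} (hp0 : 0 < p) (hp1 : p < 1)
    (hx0 : 0 < x) (hx1 : x < 1) :
    ENNReal.ofReal p * (∫⁻ t in Ioo 0 1, ENNReal.ofReal (unnormalizedBetaDensity p t) *
        ENNReal.ofReal (min ((x - t) / (1 - t)) 1)) +
      ENNReal.ofReal (1 - p) * (∫⁻ t in Ioo 0 1, ENNReal.ofReal (unnormalizedBetaDensity p t) *
        ENNReal.ofReal (min (x / t) 1)) =
    ∫⁻ t in Ioc 0 x, ENNReal.ofReal (unnormalizedBetaDensity p t) := by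
  set w : ℝ → ℝ≥0∞ := fun t => ENNReal.ofReal (unnormalizedBetaDensity p t)
  have hmul {t : ℝ} (ht0 : 0 < t) (ht1 : t < 1) {a : ℝ} (ha : a ≤ 1) :
      w t * ENNReal.ofReal (min a 1) = ENNReal.ofReal (unnormalizedBetaDensity p t * a) := by
    rw [min_eq_left ha, ENNReal.ofReal_mul (unnormalizedBetaDensity_nonneg p ht0.le ht1.le)]
  have hA1 : ∫⁻ t in Ioc 0 x, w t * ENNReal.ofReal (min ((x - t) / (1 - t)) 1) =
      ∫⁻ t in Ioc 0 x, ENNReal.ofReal (unnormalizedBetaDensity p t * ((x - t) / (1 - t))) :=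
    setLIntegral_congr_fun measurableSet_Ioc fun t ht => hmul ht.1 (by linarith [ht.2])
      ((div_le_one (by linarith [ht.2])).2 (by linarith))
  have hA2 : ∫⁻ t in Ioo x 1, w t * ENNReal.ofReal (min ((x - t) / (1 - t)) 1) = 0 :=
    setLIntegral_eq_zero measurableSet_Ioo fun t ht => by
      rw [Pi.zero_apply, ENNReal.ofReal_of_nonpos (min_le_of_left_le
        (div_nonpos_of_nonpos_of_nonneg (by linarith [ht.1]) (by linarith [ht.2]))), mul_zero]
  have hB1 : ∫⁻ t in Ioc 0 x, w t * ENNReal.ofReal (min (x / t) 1) = ∫⁻ t in Ioc 0 x, w t :=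
    setLIntegral_congr_fun measurableSet_Ioc fun t ht => by
      rw [min_eq_right ((one_le_div ht.1).2 ht.2), ENNReal.ofReal_one, mul_one]
  have hB2 : ∫⁻ t in Ioo x 1, w t * ENNReal.ofReal (min (x / t) 1) =
      ∫⁻ t in Ioo x 1, ENNReal.ofReal (unnormalizedBetaDensity p t * (x / t)) :=
    setLIntegral_congr_fun measurableSet_Ioo fun t ht => hmul (hx0.trans ht.1) ht.2
      ((div_le_one (hx0.trans ht.1)).2 ht.1.le)
  have hdisj : Disjoint (Ioc 0 x) (Ioo x 1) :=
    Ioc_disjoint_Ioi_same.mono_right Ioo_subset_Ioi_self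
  rw [← Ioc_union_Ioo_eq_Ioo hx0.le hx1, lintegral_union measurableSet_Ioo hdisj,
    lintegral_union measurableSet_Ioo hdisj, hA1, hA2, add_zero, hB1, hB2,
    lintegral_mixture_cdf_split hp0 hp1 hx0 hx1]

lemma lintegral_mixture_cdf {p : ℝ} (hp0 : 0 < p) (hp1 : p < 1) (x : ℝ) :
    ENNReal.ofReal p * (∫⁻ t in Ioo 0 1, ENNReal.ofReal (unnormalizedBetaDensity p t) *
        ENNReal.ofReal (min ((x - t) / (1 - t)) 1)) +
      ENNReal.ofReal (1 - p) * (∫⁻ t in Ioo 0 1, ENNReal.ofReal (unnormalizedBetaDensity p t) *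
        ENNReal.ofReal (min (x / t) 1)) =
    ∫⁻ t in Iic x ∩ Ioo 0 1, ENNReal.ofReal (unnormalizedBetaDensity p t) := by
  set w : ℝ → ℝ≥0∞ := fun t => ENNReal.ofReal (unnormalizedBetaDensity p t)
  rcases le_or_gt x 0 with hx0 | hx0
  · have hempty : Iic x ∩ Ioo 0 1 = ∅ :=
      eq_empty_of_forall_notMem fun t ht => by linarith [mem_Iic.1 ht.1, ht.2.1]
    have hzero {f : ℝ → ℝ} (hf : ∀ t ∈ Ioo (0:ℝ) 1, f t ≤ 0) :
        ∫⁻ t in Ioo 0 1, w t * ENNReal.ofReal (min (f t) 1) = 0 :=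
      setLIntegral_eq_zero measurableSet_Ioo fun t ht => by
        rw [Pi.zero_apply, ENNReal.ofReal_of_nonpos (min_le_of_left_le (hf t ht)), mul_zero]
    rw [hempty, hzero fun t ht => div_nonpos_of_nonpos_of_nonneg (by linarith [ht.1])
        (by linarith [ht.2]), hzero fun t ht => div_nonpos_of_nonpos_of_nonneg hx0 ht.1.le]
    simp
  rcases lt_or_ge x 1 with hx1 | hx1
  · have hRHS : Iic x ∩ Ioo 0 1 = Ioc 0 x := by
      ext t; simp only [mem_inter_iff, mem_Iic, mem_Ioo, mem_Ioc]
      constructor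
      · rintro ⟨htx, ht0, -⟩; exact ⟨ht0, htx⟩
      · rintro ⟨ht0, htx⟩; exact ⟨htx, ht0, by linarith⟩
    rw [hRHS, lintegral_mixture_cdf_of_pos_of_lt_one hp0 hp1 hx0 hx1]
  · have hfull : Iic x ∩ Ioo 0 1 = Ioo 0 1 := inter_eq_right.2 fun t ht => by
      simp only [mem_Iic]; linarith [ht.2]
    have hone {f : ℝ → ℝ} (hf : ∀ t ∈ Ioo (0:ℝ) 1, 1 ≤ f t) :
        ∫⁻ t in Ioo 0 1, w t * ENNReal.ofReal (min (f t) 1) = ∫⁻ t in Ioo 0 1, w t :=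
      setLIntegral_congr_fun measurableSet_Ioo fun t ht => by
        rw [min_eq_right (hf t ht), ENNReal.ofReal_one, mul_one]
    rw [hfull, hone fun t ht => (one_le_div (by linarith [ht.2])).2 (by linarith),
      hone fun t ht => (one_le_div ht.1).2 (by linarith [ht.2]), ← add_mul,
      ← ENNReal.ofReal_add hp0.le (by linarith), add_sub_cancel, ENNReal.ofReal_one, one_mul]

lemma restrict_Icc_prod_bernoulliMeasure_prod_preimage_Iic {p : ℝ} (hp0 : 0 < p) (hp1 : p < 1)
    (x : ℝ) :
    (volume.restrict (Icc (0:ℝ) 1)).prod ((bernoulliMeasure p).prod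
        ((volume.restrict (Ioo 0 1)).withDensity
          fun t => ENNReal.ofReal (unnormalizedBetaDensity p t)))
      ((fun q : ℝ × ℝ × ℝ => q.1 * q.2.1 + (1 - q.1) * q.2.2) ⁻¹' Iic x) =
    (volume.restrict (Ioo 0 1)).withDensity
      (fun t => ENNReal.ofReal (unnormalizedBetaDensity p t)) (Iic x) := by
  rw [prod_bernoulliMeasure_prod_apply _ _ _ (measurableSet_Iic.preimage (by fun_prop)),
    withDensity_apply _ measurableSet_Iic, Measure.restrict_restrict measurableSet_Iic,
    ← lintegral_mixture_cdf hp0 hp1 x]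
  simp only [lintegral_withDensity_eq_lintegral_mul_non_measurable _
      (measurable_unnormalizedBetaDensity p).ennreal_ofReal (ae_of_all _ fun _ => ofReal_lt_top),
    preimage_preimage, Pi.mul_apply, mul_one, mul_zero, zero_add]
  congr 2 <;> refine setLIntegral_congr_fun measurableSet_Ioo fun t ht => ?_
  · rw [restrict_Icc_zero_one_preimage_Iic_add ht.2]
  · rw [restrict_Icc_zero_one_preimage_Iic_mul ht.1]

/-- for `p ∈ (0,1)`, the pushforward of `Leb[0,1] ⊗ Bernoulli(p) ⊗ β(p,1−p)`
under `(v,b,x) ↦ v·b + (1−v)·x` equals `β(p,1−p)`: if `V` is uniform on `[0,1]`, `B` is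
Bernoulli(`p`), `X` has law `β(p,1−p)`, all independent, then `V·B + (1−V)·X ~ β(p,1−p)`. -/
theorem betaMeasure_fixed_point (p : ℝ) (hp : p ∈ Set.Ioo (0:ℝ) 1) :
    Measure.map (fun q : ℝ × ℝ × ℝ => q.1 * q.2.1 + (1 - q.1) * q.2.2)
      ((volume.restrict (Set.Icc (0:ℝ) 1)).prod
        ((bernoulliMeasure p).prod (betaMeasure p (1 - p)))) =
    betaMeasure p (1 - p) := by
  obtain ⟨hp0, hp1⟩ := hp
  have : IsProbabilityMeasure (betaMeasure p (1 - p)) := by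
    rw [betaMeasure_eq_probabilityTheory_betaMeasure (add_sub_cancel p 1)]
    exact ProbabilityTheory.isProbabilityMeasureBeta hp0 (sub_pos.2 hp1)
  refine (Measure.ext_of_Iic _ _ fun x => ?_).symm
  rw [Measure.map_apply (by fun_prop) measurableSet_Iic, betaMeasure_eq_smul_withDensity,
    Measure.prod_smul_right, Measure.prod_smul_right, Measure.smul_apply, Measure.smul_apply,
    restrict_Icc_prod_bernoulliMeasure_prod_preimage_Iic hp0 hp1]
end

section
/- Let p ∈ (0,1). If ρ is a probability measure on [0,1] such that the pushforward of (Lebesgue measure on [0,1]) ⊗ Bernoulli(p) ⊗ ρ under the map (v, b, x) ↦ v·b + (1−v)·x equals ρ, then ρ = β(p,1−p). That is, β(p,1−p) is the unique probability measure on [0,1] fixed by this distributional transformation. -/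
open MeasureTheory

/-!
Integrating out the uniform variable first, `∫₀¹ (v + (1 - v) x) ^ n dv = (1 + x + ⋯ + x ^ n) / (n + 1)`
and `∫₀¹ ((1 - v) x) ^ n dv = x ^ n / (n + 1)`, so the moments `m n = ∫ x ^ n ∂ρ` of a fixed point
satisfy `(n + 1) m (n + 1) = (n + p) m n`. With `m 0 = 1` this forces `m n = Γ(p + n) / (Γ(p) n!)`,
which by Euler's Beta integral are the moments of `β(p, 1 - p)`. Finally, by Weierstrass
approximation, a finite measure on `[0, 1]` is determined by its moments.
-/

open Set Real Polynomial

theorem ContinuousOn.integrable_of_ae_mem {X E : Type*} [TopologicalSpace X] [T2Space X]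
    [MeasurableSpace X] [OpensMeasurableSpace X] [NormedAddCommGroup E] {μ : Measure X}
    [IsFiniteMeasure μ] {K : Set X} {f : X → E} (hf : ContinuousOn f K) (hK : IsCompact K)
    (hμ : ∀ᵐ x ∂μ, x ∈ K) : Integrable f μ := by
  rw [← Measure.restrict_eq_self_of_ae_mem hμ]
  exact hf.integrableOn_compact hK

theorem ae_prod_mem_prod {α β : Type*} [MeasurableSpace α] [MeasurableSpace β]
    {μ : Measure α} {ν : Measure β} [SFinite ν] {s : Set α} {t : Set β}
    (hs : ∀ᵐ x ∂μ, x ∈ s) (ht : ∀ᵐ y ∂ν, y ∈ t) : ∀ᵐ z ∂μ.prod ν, z ∈ s ×ˢ t :=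
  (Measure.quasiMeasurePreserving_fst.ae hs).and (Measure.quasiMeasurePreserving_snd.ae ht)

theorem dist_integral_le_of_ae_mem {X : Type*} [MeasurableSpace X] {μ : Measure X}
    [IsFiniteMeasure μ] {s : Set X} {f g : X → ℝ} {ε : ℝ} (hμ : ∀ᵐ x ∂μ, x ∈ s)
    (hf : Integrable f μ) (hg : Integrable g μ) (hfg : ∀ x ∈ s, dist (f x) (g x) ≤ ε) :
    dist (∫ x, f x ∂μ) (∫ x, g x ∂μ) ≤ ε * μ.real univ := by
  rw [dist_eq_norm, ← integral_sub hf hg]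
  exact norm_integral_le_of_norm_le_const (hμ.mono fun x hx => dist_eq_norm (f x) (g x) ▸ hfg x hx)

section Moments

variable {a b : ℝ} {μ ν : Measure ℝ} [IsFiniteMeasure μ] [IsFiniteMeasure ν]

theorem integral_eval_eq_of_integral_pow_eq (hμ : ∀ᵐ x ∂μ, x ∈ Icc a b)
    (hν : ∀ᵐ x ∂ν, x ∈ Icc a b) (h : ∀ n : ℕ, ∫ x, x ^ n ∂μ = ∫ x, x ^ n ∂ν) (P : ℝ[X]) :
    ∫ x, P.eval x ∂μ = ∫ x, P.eval x ∂ν := by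
  have hint : ∀ {κ : Measure ℝ} [IsFiniteMeasure κ], (∀ᵐ x ∂κ, x ∈ Icc a b) →
      ∀ i ∈ Finset.range (P.natDegree + 1), Integrable (fun x => P.coeff i * x ^ i) κ :=
    fun hκ _ _ => (continuous_const.mul (continuous_pow _)).continuousOn.integrable_of_ae_mem
      isCompact_Icc hκ
  simp only [eval_eq_sum_range]
  rw [integral_finsetSum _ (hint hμ), integral_finsetSum _ (hint hν)]
  exact Finset.sum_congr rfl fun i _ => by rw [integral_const_mul, integral_const_mul, h i]

theorem integral_eq_of_integral_pow_eq (hμ : ∀ᵐ x ∂μ, x ∈ Icc a b)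
    (hν : ∀ᵐ x ∂ν, x ∈ Icc a b) (h : ∀ n : ℕ, ∫ x, x ^ n ∂μ = ∫ x, x ^ n ∂ν) {g : ℝ → ℝ}
    (hg : Continuous g) : ∫ x, g x ∂μ = ∫ x, g x ∂ν := by
  refine eq_of_forall_dist_le fun ε hε => ?_
  set C := μ.real univ + ν.real univ + 1
  have hC : 0 < C := by positivity
  obtain ⟨P, hP⟩ := exists_polynomial_near_of_continuousOn a b g hg.continuousOn (ε / C)
    (div_pos hε hC)
  have approx : ∀ {κ : Measure ℝ} [IsFiniteMeasure κ], (∀ᵐ x ∂κ, x ∈ Icc a b) →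
      dist (∫ x, g x ∂κ) (∫ x, P.eval x ∂κ) ≤ ε / C * κ.real univ := fun hκ =>
    dist_integral_le_of_ae_mem hκ (hg.continuousOn.integrable_of_ae_mem isCompact_Icc hκ)
      (P.continuous.continuousOn.integrable_of_ae_mem isCompact_Icc hκ)
      fun x hx => by rw [dist_comm, Real.dist_eq]; exact (hP x hx).le
  calc dist (∫ x, g x ∂μ) (∫ x, g x ∂ν)
      ≤ dist (∫ x, g x ∂μ) (∫ x, P.eval x ∂μ) + dist (∫ x, g x ∂ν) (∫ x, P.eval x ∂ν) := by
        rw [integral_eval_eq_of_integral_pow_eq hμ hν h, dist_comm (∫ x, g x ∂ν)]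
        exact dist_triangle _ _ _
    _ ≤ ε / C * μ.real univ + ε / C * ν.real univ := add_le_add (approx hμ) (approx hν)
    _ ≤ ε := by
        rw [← mul_add, div_mul_eq_mul_div, div_le_iff₀ hC]
        nlinarith

theorem ext_of_integral_pow_eq (hμ : ∀ᵐ x ∂μ, x ∈ Icc a b) (hν : ∀ᵐ x ∂ν, x ∈ Icc a b)
    (h : ∀ n : ℕ, ∫ x, x ^ n ∂μ = ∫ x, x ^ n ∂ν) : μ = ν :=
  ext_of_forall_integral_eq_of_IsFiniteMeasure fun f =>
    integral_eq_of_integral_pow_eq hμ hν h f.continuous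

end Moments

theorem integral_rpow_mul_one_sub_rpow {a b : ℝ} (ha : 0 < a) (hb : 0 < b) :
    ∫ x in (0:ℝ)..1, x ^ (a - 1) * (1 - x) ^ (b - 1) = Gamma a * Gamma b / Gamma (a + b) := by
  have hC : Complex.betaIntegral a b = ↑(∫ x in (0:ℝ)..1, x ^ (a - 1) * (1 - x) ^ (b - 1)) := by
    rw [Complex.betaIntegral, ← intervalIntegral.integral_ofReal]
    refine intervalIntegral.integral_congr fun x hx => ?_
    rw [uIcc_of_le zero_le_one] at hx
    simp only [Complex.ofReal_mul, Complex.ofReal_cpow hx.1,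
      Complex.ofReal_cpow (sub_nonneg.2 hx.2)]
    push_cast
    ring_nf
  have h := Complex.betaIntegral_eq_Gamma_mul_div a b (by simpa using ha) (by simpa using hb)
  rw [hC, ← Complex.ofReal_add, Complex.Gamma_ofReal, Complex.Gamma_ofReal,
    Complex.Gamma_ofReal] at h
  exact_mod_cast h

section Beta

variable {a b : ℝ}

theorem ae_mem_Icc_betaMeasure : ∀ᵐ x ∂betaMeasure a b, x ∈ Icc 0 1 := by
  rw [betaMeasure, ae_withDensity_iff (by fun_prop)]
  exact ae_restrict_of_forall_mem measurableSet_Icc fun x hx _ => hx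

theorem integral_betaMeasure (ha : 0 < a) (hb : 0 < b) (f : ℝ → ℝ) :
    ∫ x, f x ∂betaMeasure a b
      = (∫ x in (0:ℝ)..1, f x * (x ^ (a - 1) * (1 - x) ^ (b - 1))) / (Gamma a * Gamma b) := by
  have hΓ : 0 < Gamma a * Gamma b := mul_pos (Gamma_pos_of_pos ha) (Gamma_pos_of_pos hb)
  rw [betaMeasure, integral_withDensity_eq_integral_toReal_smul (by fun_prop)
      (ae_of_all _ fun _ => ENNReal.ofReal_lt_top), intervalIntegral.integral_of_le zero_le_one,
    ← integral_Icc_eq_integral_Ioc, ← integral_div]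
  refine setIntegral_congr_fun measurableSet_Icc fun x hx => ?_
  have hdens : 0 ≤ x ^ (a - 1) * (1 - x) ^ (b - 1) :=
    mul_nonneg (rpow_nonneg hx.1 _) (rpow_nonneg (sub_nonneg.2 hx.2) _)
  rw [ENNReal.toReal_ofReal (div_nonneg hdens hΓ.le), smul_eq_mul]
  ring

theorem integral_pow_betaMeasure (ha : 0 < a) (hb : 0 < b) (n : ℕ) :
    ∫ x, x ^ n ∂betaMeasure a b = Gamma (a + n) / (Gamma a * Gamma (a + b + n)) := by
  have hpow : ∫ x in (0:ℝ)..1, x ^ n * (x ^ (a - 1) * (1 - x) ^ (b - 1))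
      = ∫ x in (0:ℝ)..1, x ^ (a + n - 1) * (1 - x) ^ (b - 1) := by
    refine intervalIntegral.integral_congr_ae (ae_of_all _ fun x hx => ?_)
    rw [uIoc_of_le zero_le_one] at hx
    rw [← mul_assoc, ← rpow_natCast, ← rpow_add hx.1]
    ring_nf
  rw [integral_betaMeasure ha hb, hpow, integral_rpow_mul_one_sub_rpow (by positivity) hb,
    add_right_comm]
  have := Gamma_pos_of_pos ha
  have := Gamma_pos_of_pos hb
  have := Gamma_pos_of_pos (s := a + b + n) (by positivity)
  field_simp

theorem isProbabilityMeasure_betaMeasure (ha : 0 < a) (hb : 0 < b) (hab : a + b = 1) :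
    IsProbabilityMeasure (betaMeasure a b) := by
  have h := integral_pow_betaMeasure ha hb 0
  simp only [pow_zero, integral_const, smul_eq_mul, mul_one, Nat.cast_zero, add_zero, hab,
    Gamma_one, div_self (Gamma_pos_of_pos ha).ne'] at h
  exact ⟨(ENNReal.toReal_eq_one_iff _).mp h⟩

end Beta

section Bernoulli

variable {p : ℝ}

instance isFiniteMeasure_bernoulliMeasure (p : ℝ) : IsFiniteMeasure (bernoulliMeasure p) :=
  ⟨by simp [bernoulliMeasure]⟩

theorem ae_mem_Icc_bernoulliMeasure : ∀ᵐ b ∂bernoulliMeasure p, b ∈ Icc 0 1 := by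
  rw [bernoulliMeasure, ae_add_measure_iff]
  exact ⟨Measure.ae_smul_measure ((ae_dirac_iff measurableSet_Icc).2 (by simp)) _,
    Measure.ae_smul_measure ((ae_dirac_iff measurableSet_Icc).2 (by simp)) _⟩

theorem integral_bernoulliMeasure (hp0 : 0 ≤ p) (hp1 : p ≤ 1) (f : ℝ → ℝ) :
    ∫ b, f b ∂bernoulliMeasure p = p * f 1 + (1 - p) * f 0 := by
  rw [bernoulliMeasure,
    integral_add_measure ((integrable_dirac enorm_lt_top).smul_measure ENNReal.ofReal_ne_top)
      ((integrable_dirac enorm_lt_top).smul_measure ENNReal.ofReal_ne_top),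
    integral_smul_measure, integral_smul_measure, integral_dirac, integral_dirac,
    ENNReal.toReal_ofReal hp0, ENNReal.toReal_ofReal (sub_nonneg.2 hp1), smul_eq_mul, smul_eq_mul]

end Bernoulli

theorem integral_add_one_sub_mul_pow (x : ℝ) (n : ℕ) :
    ∫ v in (0:ℝ)..1, (v + (1 - v) * x) ^ n = (∑ k ∈ Finset.range (n + 1), x ^ k) / (n + 1) := by
  rcases eq_or_ne x 1 with rfl | hx
  · simp only [mul_one, add_sub_cancel, one_pow, Finset.sum_const, Finset.card_range,
      nsmul_eq_mul, intervalIntegral.integral_const, sub_zero, smul_eq_mul]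
    push_cast
    rw [div_self (by positivity)]
  · -- the affine substitution `u = v + (1 - v) x` degenerates at `x = 1`
    have hx' : 1 - x ≠ 0 := sub_ne_zero.2 hx.symm
    have haff : ∀ v : ℝ, v + (1 - v) * x = (1 - x) * v + x := fun v => by ring
    simp only [haff]
    rw [intervalIntegral.integral_comp_mul_add (fun u => u ^ n) hx', integral_pow, mul_zero,
      zero_add, mul_one, sub_add_cancel, one_pow, ← mul_neg_geom_sum, smul_eq_mul]
    field_simp

theorem integral_one_sub_mul_pow (x : ℝ) (n : ℕ) :
    ∫ v in (0:ℝ)..1, ((1 - v) * x) ^ n = x ^ n / (n + 1) := by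
  rw [funext fun v : ℝ => mul_pow (1 - v) x n, intervalIntegral.integral_mul_const,
    intervalIntegral.integral_comp_sub_left (fun v => v ^ n), integral_pow, sub_zero, sub_self,
    one_pow, zero_pow n.succ_ne_zero, sub_zero, div_mul_eq_mul_div, one_mul]

noncomputable def mixtureTransform (p : ℝ) (ρ : Measure ℝ) : Measure ℝ :=
  Measure.map (fun q : ℝ × ℝ × ℝ => q.1 * q.2.1 + (1 - q.1) * q.2.2)
    ((volume.restrict (Icc (0:ℝ) 1)).prod ((bernoulliMeasure p).prod ρ))

section FixedPoint

variable {p : ℝ} {ρ : Measure ℝ} [IsFiniteMeasure ρ]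

theorem integral_pow_mixtureTransform (hp0 : 0 ≤ p) (hp1 : p ≤ 1)
    (hρ : ∀ᵐ x ∂ρ, x ∈ Icc 0 1) (n : ℕ) :
    ∫ x, x ^ n ∂mixtureTransform p ρ
      = (p * ∑ k ∈ Finset.range (n + 1), ∫ x, x ^ k ∂ρ + (1 - p) * ∫ x, x ^ n ∂ρ) / (n + 1) := by
  have hint : Integrable (fun q : ℝ × ℝ × ℝ => (q.1 * q.2.1 + (1 - q.1) * q.2.2) ^ n)
      ((volume.restrict (Icc (0:ℝ) 1)).prod ((bernoulliMeasure p).prod ρ)) :=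
    (by fun_prop : Continuous _).continuousOn.integrable_of_ae_mem
      (isCompact_Icc.prod (isCompact_Icc.prod isCompact_Icc))
      (ae_prod_mem_prod (ae_restrict_mem measurableSet_Icc)
        (ae_prod_mem_prod ae_mem_Icc_bernoulliMeasure hρ))
  have hinner : ∀ w : ℝ × ℝ, ∫ v in Icc (0:ℝ) 1, (v * w.1 + (1 - v) * w.2) ^ n
      = ∫ v in (0:ℝ)..1, (v * w.1 + (1 - v) * w.2) ^ n := fun w => by
    rw [integral_Icc_eq_integral_Ioc, intervalIntegral.integral_of_le zero_le_one]
  have hmom : ∀ k, Integrable (fun x : ℝ => x ^ k) ρ := fun k =>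
    (continuous_pow k).continuousOn.integrable_of_ae_mem isCompact_Icc hρ
  rw [mixtureTransform, integral_map (by fun_prop) (by fun_prop), integral_prod_symm _ hint]
  simp only [hinner]
  rw [integral_prod _ (by simpa only [hinner] using hint.integral_prod_right),
    integral_bernoulliMeasure hp0 hp1]
  simp only [mul_one, mul_zero, zero_add, integral_add_one_sub_mul_pow, integral_one_sub_mul_pow]
  rw [integral_div, integral_div, integral_finsetSum _ fun k _ => hmom k, add_div,
    mul_div_assoc, mul_div_assoc]

theorem integral_pow_succ_of_mixtureTransform_eq (hp0 : 0 ≤ p) (hp1 : p ≤ 1)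
    (hρ : ∀ᵐ x ∂ρ, x ∈ Icc 0 1) (hfix : mixtureTransform p ρ = ρ) (n : ℕ) :
    (n + 1) * ∫ x, x ^ (n + 1) ∂ρ = (n + p) * ∫ x, x ^ n ∂ρ := by
  have h := integral_pow_mixtureTransform hp0 hp1 hρ
  rw [hfix] at h
  have hn := h n
  have hn1 := h (n + 1)
  rw [Finset.sum_range_succ _ (n + 1)] at hn1
  push_cast at hn1
  field_simp at hn hn1
  linarith

end FixedPoint

theorem eq_Gamma_div_of_recurrence {p : ℝ} (hp : 0 < p) {m : ℕ → ℝ} (h0 : m 0 = 1)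
    (hrec : ∀ n : ℕ, (n + 1) * m (n + 1) = (n + p) * m n) (n : ℕ) :
    m n = Gamma (p + n) / (Gamma p * Gamma (n + 1)) := by
  induction n with
  | zero => simp [h0, div_self (Gamma_pos_of_pos hp).ne']
  | succ n ih =>
    have hn : (n : ℝ) + 1 ≠ 0 := by positivity
    have hpn : Gamma (p + ↑(n + 1)) = (p + n) * Gamma (p + n) := by
      rw [Nat.cast_succ, ← add_assoc, Gamma_add_one (by positivity)]
    rw [← mul_right_inj' hn, hrec n, ih, hpn, Nat.cast_succ, Gamma_add_one hn]
    have := Gamma_pos_of_pos hp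
    have := Gamma_pos_of_pos (s := n + 1) (by positivity)
    field_simp
    ring

/-- for `p ∈ (0,1)`, `β(p,1−p)` is the unique probability measure `ρ` on `[0,1]`
fixed by the transformation `ρ ↦ law of V·B + (1−V)·X` where `V` is uniform on `[0,1]`, `B` is
Bernoulli(`p`) and `X ~ ρ` are independent. -/
theorem betaMeasure_unique_fixed_point (p : ℝ) (hp : p ∈ Set.Ioo (0:ℝ) 1)
    (ρ : Measure ℝ) [IsProbabilityMeasure ρ] (hsupp : ρ (Set.Icc (0:ℝ) 1)ᶜ = 0)
    (hfix : Measure.map (fun q : ℝ × ℝ × ℝ => q.1 * q.2.1 + (1 - q.1) * q.2.2)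
      ((volume.restrict (Set.Icc (0:ℝ) 1)).prod ((bernoulliMeasure p).prod ρ)) = ρ) :
    ρ = betaMeasure p (1 - p) := by
  obtain ⟨hp0, hp1⟩ := hp
  have hq : 0 < 1 - p := sub_pos.2 hp1
  have hρ : ∀ᵐ x ∂ρ, x ∈ Icc 0 1 := mem_ae_iff.mpr hsupp
  have := isProbabilityMeasure_betaMeasure hp0 hq (add_sub_cancel p 1)
  refine ext_of_integral_pow_eq hρ ae_mem_Icc_betaMeasure fun n => ?_
  rw [integral_pow_betaMeasure hp0 hq, add_sub_cancel, add_comm (1 : ℝ)]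
  exact eq_Gamma_div_of_recurrence (m := fun n => ∫ x, x ^ n ∂ρ) hp0 (by simp)
    (integral_pow_succ_of_mixtureTransform_eq hp0.le hp1.le hρ hfix) n
end
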